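/- If M, K are symmetric positive definite and D symmetric positive semidefinite, then every eigenvalue λ ∈ ℂ of the quadratic pencil λ² M + λ D + K (i.e., det(λ²M + λD + K) = 0) has non-positive real part. -/

import Mathlib

/-!
If `(λ² M + λ D + K) v = 0` with `v ≠ 0`, then `λ` is a root of `m z² + d z + k` where
`m = v* M v > 0`, `d = v* D v ≥ 0` and `k = v* K v ≥ 0` are real. A non-real root of such a
quadratic has real part `-d / 2m`, and a positive real number makes every term positive.
-/

open Matrix
open scoped MatrixOrder ComplexOrder

namespace Matrix

variable {n : Type*} [Fintype n]

theorem PosSemidef.map_ofReal {A : Matrix n n ℝ} (hA : A.PosSemidef) :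
    (A.map Complex.ofReal).PosSemidef := by
  classical
  obtain ⟨B, rfl⟩ := CStarAlgebra.nonneg_iff_eq_star_mul_self.mp hA.nonneg
  convert posSemidef_conjTranspose_mul_self (B.map Complex.ofReal) using 1
  ext i j
  simp [mul_apply]

theorem PosDef.map_ofReal {A : Matrix n n ℝ} (hA : A.PosDef) :
    (A.map Complex.ofReal).PosDef := by
  classical
  rw [hA.posSemidef.map_ofReal.posDef_iff_det_ne_zero,
    show (A.map Complex.ofReal).det = A.det from (RingHom.map_det Complex.ofRealHom A).symm]
  exact_mod_cast hA.det_pos.ne'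

end Matrix

theorem Complex.re_nonpos_of_mul_sq_add_mul_add_eq_zero {a b c z : ℂ}
    (ha : 0 < a) (hb : 0 ≤ b) (hc : 0 ≤ c) (h : a * z ^ 2 + b * z + c = 0) : z.re ≤ 0 := by
  obtain ⟨ha, ha'⟩ := Complex.pos_iff.mp ha
  obtain ⟨hb, hb'⟩ := Complex.nonneg_iff.mp hb
  obtain ⟨hc, hc'⟩ := Complex.nonneg_iff.mp hc
  have hre := congrArg Complex.re h
  have him := congrArg Complex.im h
  simp only [pow_two, add_re, add_im, mul_re, mul_im, zero_re, zero_im, ← ha', ← hb', ← hc',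
    zero_mul, sub_zero, add_zero] at hre him
  by_contra! hz
  have hy : z.im = 0 := by
    have : z.im * (2 * a.re * z.re + b.re) = 0 := by linarith
    exact (mul_eq_zero.mp this).resolve_right (by positivity)
  rw [hy] at hre
  nlinarith [mul_pos ha (mul_pos hz hz)]

theorem stmt_9 (n : ℕ)
    (M D K : Matrix (Fin n) (Fin n) ℝ)
    (hM : M.PosDef) (hK : K.PosDef) (hD : D.PosSemidef)
    (l : ℂ)
    (hdet : (l ^ 2 • M.map (Complex.ofReal) + l • D.map (Complex.ofReal)
      + K.map (Complex.ofReal)).det = 0) :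
    l.re ≤ 0 := by
  obtain ⟨v, hv, hPv⟩ := exists_mulVec_eq_zero_iff.mpr hdet
  refine Complex.re_nonpos_of_mul_sq_add_mul_add_eq_zero
    (hM.map_ofReal.dotProduct_mulVec_pos hv) (hD.map_ofReal.dotProduct_mulVec_nonneg v)
    (hK.posSemidef.map_ofReal.dotProduct_mulVec_nonneg v) ?_
  have := congrArg (star v ⬝ᵥ ·) hPv
  simpa [add_mulVec, smul_mulVec, dotProduct_add, dotProduct_smul, mul_comm] using this
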